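/- arXiv:2512.07645 — 3 statements merged into one kernel-verified Lean document; each statement's English description precedes it below -/
import Mathlib

section
/- Let Ω ⊂ ℝᴺ be a bounded open set, let s : ℝᴺ×ℝᴺ → (0,1) be continuous and symmetric with 0 < s⁻ ≤ s⁺ < 1, and let G : Ω̄×Ω̄×ℝ → ℝ be a generalized N-function satisfying the fractional boundedness condition: there exist C₁, C₂ > 0 with C₁ ≤ G(x,y,1) ≤ C₂ for all (x,y). Then every u ∈ C₀²(Ω) (twice continuously differentiable with compact support in Ω) belongs to the fractional Musielak–Sobolev space W^{s(·,·),G_{x,y}}(Ω), i.e. u ∈ L^{Ĝ_x}(Ω) and ∫_Ω∫_Ω G(x,y, λ(u(x)−u(y))/|x−y|^{s(x,y)}) dx dy/|x−y|ᴺ < ∞ for some λ > 0. -/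
/-!
Scaling `u` by a small `λ` makes `|λ (u x - u y)| ≤ min (|x - y|) 1`, since `u` is Lipschitz and
bounded. An even convex `G` with `G 0 = 0` lies below its chord on `[-1, 1]`, so
`|G t| ≤ G 1 * |t| ≤ C₂ * |t|` there. Hence the nonlocal integrand is dominated by
`C₂ * (|x - y| ^ (1 - s⁺ - N) + 1)`, which is integrable on the bounded set `Ω × Ω` because
`1 - s⁺ - N > -N`; the local integrand is simply bounded by `C₂`.
-/

open Filter Set MeasureTheory

theorem measurable_caratheodory_comp {α : Type*} [MeasurableSpace α] {Φ : α → ℝ → ℝ}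
    (hm : ∀ t, Measurable fun a => Φ a t) (hc : ∀ a, Continuous (Φ a)) {F : α → ℝ}
    (hF : Measurable F) : Measurable fun a => Φ a (F a) :=
  (measurable_uncurry_of_continuous_of_measurable (u := fun t a => Φ a t) hc hm).comp
    (hF.prodMk measurable_id)

section

variable {E : Type*} [NormedAddCommGroup E] [NormedSpace ℝ E] [FiniteDimensional ℝ E]
  [MeasurableSpace E] [BorelSpace E] (μ : Measure E) [μ.IsAddHaarMeasure]

theorem locallyIntegrable_norm_rpow {r : ℝ} (hr : -(Module.finrank ℝ E : ℝ) < r) :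
    LocallyIntegrable (fun x : E => ‖x‖ ^ r) μ := by
  rcases Nat.eq_zero_or_pos (Module.finrank ℝ E) with h0 | hpos
  · have : Subsingleton E := Module.finrank_zero_iff.1 h0
    simpa [Subsingleton.elim _ (0 : E)] using locallyIntegrable_const ((0 : ℝ) ^ r)
  · refine locallyIntegrable_of_norm_le_rpow hpos (C := 1) (α := -r) (by linarith)
      (ae_of_all _ fun x => ?_) ?_
    · simp [abs_of_nonneg (Real.rpow_nonneg (norm_nonneg x) r)]
    · exact (measurable_norm.pow_const r).aestronglyMeasurable

theorem integrableOn_prod_norm_sub_rpow {S : Set E} (hS : Bornology.IsBounded S) {r : ℝ}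
    (hr : -(Module.finrank ℝ E : ℝ) < r) :
    IntegrableOn (fun p : E × E => ‖p.1 - p.2‖ ^ r) (S ×ˢ S) (μ.prod μ) := by
  obtain ⟨R, hR⟩ := hS.subset_closedBall 0
  have hball : IntegrableOn (fun q : E × E => ‖q.2‖ ^ r)
      (Metric.closedBall 0 R ×ˢ Metric.closedBall 0 (2 * R)) (μ.prod μ) := by
    have : IsFiniteMeasure (μ.restrict (Metric.closedBall 0 R)) :=
      isFiniteMeasure_restrict.2 measure_closedBall_lt_top.ne
    rw [IntegrableOn, ← Measure.prod_restrict]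
    exact ((locallyIntegrable_norm_rpow μ hr).integrableOn_isCompact
      (isCompact_closedBall 0 _)).comp_snd _
  have hsub : S ×ˢ S ⊆ (fun z : E × E => (z.1, z.2 - z.1)) ⁻¹'
      (Metric.closedBall 0 R ×ˢ Metric.closedBall 0 (2 * R)) := by
    rintro ⟨x, y⟩ ⟨hx, hy⟩
    have hx' := mem_closedBall_zero_iff.1 (hR hx)
    have hy' := mem_closedBall_zero_iff.1 (hR hy)
    refine ⟨hR hx, mem_closedBall_zero_iff.2 ?_⟩
    linarith [norm_sub_le y x]
  have hshear := ((measurePreserving_prod_sub μ μ).integrableOn_comp_preimage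
    (MeasurableEquiv.shearSubRight E).measurableEmbedding).2 hball
  have hcomp : ((fun q : E × E => ‖q.2‖ ^ r) ∘ fun z : E × E => (z.1, z.2 - z.1)) =
      fun p : E × E => ‖p.1 - p.2‖ ^ r := by
    funext p
    simp [norm_sub_rev]
  exact hcomp ▸ hshear.mono_set hsub

end

theorem ConvexOn.nonneg_of_even {φ : ℝ → ℝ} (hφ : ConvexOn ℝ univ φ) (heven : ∀ t, φ (-t) = φ t)
    (h0 : φ 0 = 0) (t : ℝ) : 0 ≤ φ t := by
  have hmid := hφ.2 (mem_univ t) (mem_univ (-t)) (by norm_num : (0 : ℝ) ≤ 1 / 2)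
    (by norm_num : (0 : ℝ) ≤ 1 / 2) (by norm_num)
  simp only [smul_eq_mul, heven, show (1 / 2 : ℝ) * t + 1 / 2 * -t = 0 by ring, h0] at hmid
  linarith

theorem ConvexOn.le_mul_apply_one {φ : ℝ → ℝ} (hφ : ConvexOn ℝ univ φ) (h0 : φ 0 = 0) {t : ℝ}
    (ht0 : 0 ≤ t) (ht1 : t ≤ 1) : φ t ≤ t * φ 1 := by
  have := hφ.2 (mem_univ 1) (mem_univ 0) ht0 (sub_nonneg.2 ht1) (by ring)
  simpa [h0] using this

theorem ConvexOn.abs_le_mul_abs_of_abs_le_one {φ : ℝ → ℝ} (hφ : ConvexOn ℝ univ φ)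
    (heven : ∀ t, φ (-t) = φ t) (h0 : φ 0 = 0) {C : ℝ} (hC : φ 1 ≤ C) {t : ℝ} (ht : |t| ≤ 1) :
    |φ t| ≤ C * |t| := by
  have habs : φ t = φ |t| := by
    rcases abs_choice t with h | h <;> rw [h]; rw [heven]
  rw [abs_of_nonneg (hφ.nonneg_of_even heven h0 t), habs, mul_comm]
  exact (hφ.le_mul_apply_one h0 (abs_nonneg t) ht).trans
    (mul_le_mul_of_nonneg_left hC (abs_nonneg t))

theorem div_rpow_le_one {a d s : ℝ} (hd : 0 ≤ d) (had : a ≤ d) (ha1 : a ≤ 1) (hs0 : 0 ≤ s)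
    (hs1 : s ≤ 1) : a / d ^ s ≤ 1 := by
  refine div_le_one_of_le₀ ?_ (Real.rpow_nonneg hd s)
  rcases le_or_gt d 1 with hd1 | hd1
  · calc a ≤ d := had
      _ = d ^ (1 : ℝ) := (Real.rpow_one d).symm
      _ ≤ d ^ s := Real.rpow_le_rpow_of_exponent_ge' hd hd1 hs0 hs1
  · exact ha1.trans (Real.one_le_rpow hd1.le hs0)

theorem div_rpow_div_rpow_le {a d s σ n : ℝ} (hd : 0 ≤ d) (ha0 : 0 ≤ a) (had : a ≤ d)
    (ha1 : a ≤ 1) (hs0 : 0 ≤ s) (hsσ : s ≤ σ) (hσ : σ ≤ 1) (hn : 0 ≤ n) :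
    a / d ^ s / d ^ n ≤ d ^ (1 - σ - n) + 1 := by
  rcases hd.eq_or_lt with rfl | hd0
  · rw [le_antisymm had ha0, zero_div, zero_div]
    positivity
  rcases le_or_gt d 1 with hd1 | hd1
  · calc a / d ^ s / d ^ n ≤ d / d ^ s / d ^ n := by gcongr
      _ = d ^ (1 - s - n) := by
        rw [Real.rpow_sub hd0, Real.rpow_sub hd0, Real.rpow_one]
      _ ≤ d ^ (1 - σ - n) := Real.rpow_le_rpow_of_exponent_ge hd0 hd1 (by linarith)
      _ ≤ d ^ (1 - σ - n) + 1 := le_add_of_nonneg_right zero_le_one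
  · have h1 : a / d ^ s / d ^ n ≤ 1 :=
      div_le_one_of_le₀ ((div_rpow_le_one hd had ha1 hs0 (hsσ.trans hσ)).trans
        (Real.one_le_rpow hd1.le hn)) (Real.rpow_nonneg hd n)
    linarith [Real.rpow_nonneg hd (1 - σ - n)]

theorem ConvexOn.norm_apply_div_rpow_div_rpow_le {φ : ℝ → ℝ} (hφ : ConvexOn ℝ univ φ)
    (heven : ∀ t, φ (-t) = φ t) (h0 : φ 0 = 0) {C : ℝ} (hC0 : 0 ≤ C) (hC : φ 1 ≤ C)
    {a d s σ n : ℝ} (hd : 0 ≤ d) (ha : |a| ≤ min d 1) (hs0 : 0 ≤ s) (hsσ : s ≤ σ) (hσ : σ ≤ 1)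
    (hn : 0 ≤ n) :
    ‖φ (a / d ^ s) / d ^ n‖ ≤ C * (d ^ (1 - σ - n) + 1) := by
  have had : |a| ≤ d := ha.trans (min_le_left _ _)
  have ha1 : |a| ≤ 1 := ha.trans (min_le_right _ _)
  have hq : |a / d ^ s| = |a| / d ^ s := by rw [abs_div, abs_of_nonneg (Real.rpow_nonneg hd _)]
  have hq1 : |a / d ^ s| ≤ 1 := hq ▸ div_rpow_le_one hd had ha1 hs0 (hsσ.trans hσ)
  calc ‖φ (a / d ^ s) / d ^ n‖ = |φ (a / d ^ s)| / d ^ n := by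
        rw [Real.norm_eq_abs, abs_div, abs_of_nonneg (Real.rpow_nonneg hd _)]
    _ ≤ C * |a / d ^ s| / d ^ n := by
        gcongr; exact hφ.abs_le_mul_abs_of_abs_le_one heven h0 hC hq1
    _ = C * (|a| / d ^ s / d ^ n) := by rw [hq, mul_div_assoc]
    _ ≤ C * (d ^ (1 - σ - n) + 1) := by
        gcongr; exact div_rpow_div_rpow_le hd (abs_nonneg a) had ha1 hs0 hsσ hσ hn

theorem LipschitzWith.exists_pos_abs_mul_sub_le_min {X : Type*} [PseudoMetricSpace X]
    {u : X → ℝ} {K : NNReal} (hK : LipschitzWith K u) {M : ℝ} (hM : ∀ x, |u x| ≤ M) :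
    ∃ l > (0 : ℝ), ∀ x y, |l * (u x - u y)| ≤ min (dist x y) 1 := by
  refine ⟨(K + 2 * |M| + 1)⁻¹, by positivity, fun x y => ?_⟩
  have hlip : |u x - u y| ≤ K * dist x y := by simpa [Real.dist_eq] using hK.dist_le_mul x y
  have hbd : |u x - u y| ≤ 2 * |M| :=
    (abs_sub _ _).trans (by linarith [hM x, hM y, le_abs_self M])
  rw [abs_mul, abs_of_pos (by positivity), inv_mul_le_iff₀ (by positivity)]
  rcases le_total (dist x y) 1 with h | h
  · rw [min_eq_left h]
    nlinarith [dist_nonneg (x := x) (y := y), abs_nonneg M]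
  · rw [min_eq_right h]
    linarith [K.coe_nonneg]

theorem stmt_10_general (N : ℕ) (Ω : Set (EuclideanSpace ℝ (Fin N)))
    (hΩbd : Bornology.IsBounded Ω)
    (s : EuclideanSpace ℝ (Fin N) → EuclideanSpace ℝ (Fin N) → ℝ)
    (hscont : Continuous (fun p : EuclideanSpace ℝ (Fin N) × EuclideanSpace ℝ (Fin N) => s p.1 p.2))
    (sm sp : ℝ) (hsm : 0 < sm) (hsp : sp < 1)
    (hsbounds : ∀ x y, sm ≤ s x y ∧ s x y ≤ sp)
    (G : EuclideanSpace ℝ (Fin N) → EuclideanSpace ℝ (Fin N) → ℝ → ℝ)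
    -- `G` is a generalized N-function
    (hmeas : ∀ t : ℝ, Measurable (fun p : EuclideanSpace ℝ (Fin N) × EuclideanSpace ℝ (Fin N) => G p.1 p.2 t))
    (heven : ∀ x y t, G x y (-t) = G x y t)
    (hconv : ∀ x y, ConvexOn ℝ Set.univ (G x y))
    (hcont : ∀ x y, Continuous (G x y))
    (hG0 : ∀ x y, G x y 0 = 0)
    -- fractional boundedness condition `G ∈ B_f`
    (C₁ C₂ : ℝ) (hC₂ : 0 < C₂)
    (hBf : ∀ x y, C₁ ≤ G x y 1 ∧ G x y 1 ≤ C₂)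
    (u : EuclideanSpace ℝ (Fin N) → ℝ)
    (hu : ContDiff ℝ 2 u) (husupp : HasCompactSupport u) :
    (∃ l > (0:ℝ), IntegrableOn (fun x => G x x (l * |u x|)) Ω) ∧
    (∃ l > (0:ℝ), IntegrableOn
      (fun p : EuclideanSpace ℝ (Fin N) × EuclideanSpace ℝ (Fin N) =>
        G p.1 p.2 (l * (u p.1 - u p.2) / dist p.1 p.2 ^ s p.1 p.2) / dist p.1 p.2 ^ (N:ℝ))
      (Ω ×ˢ Ω)) := by
  obtain ⟨M, hM⟩ : ∃ M, ∀ x, |u x| ≤ M := husupp.exists_bound_of_continuous hu.continuous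
  obtain ⟨K, hK⟩ := hu.lipschitzWith_of_hasCompactSupport husupp two_ne_zero
  have hum : Measurable u := hu.continuous.measurable
  constructor
  · refine ⟨(|M| + 1)⁻¹, by positivity, ?_⟩
    refine (integrableOn_const (C := C₂) hΩbd.measure_lt_top.ne).mono'
      (measurable_caratheodory_comp (fun t => (hmeas t).comp (measurable_id.prodMk measurable_id))
        (fun x => hcont x x) (by fun_prop)).aestronglyMeasurable (ae_of_all _ fun x => ?_)
    have ht : |((|M| + 1)⁻¹ * |u x|)| ≤ 1 := by
      rw [abs_of_nonneg (by positivity), inv_mul_le_iff₀ (by positivity), mul_one]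
      linarith [hM x, le_abs_self M]
    exact ((hconv x x).abs_le_mul_abs_of_abs_le_one (heven x x) (hG0 x x) (hBf x x).2 ht).trans
      (mul_le_of_le_one_right hC₂.le ht)
  · obtain ⟨l, hl0, hl⟩ := hK.exists_pos_abs_mul_sub_le_min hM
    refine ⟨l, hl0, ?_⟩
    have hr : -(Module.finrank ℝ (EuclideanSpace ℝ (Fin N)) : ℝ) < 1 - sp - N := by
      rw [finrank_euclideanSpace_fin]; linarith
    have hdom := ((integrableOn_prod_norm_sub_rpow volume hΩbd hr).add
      (integrableOn_const (C := (1 : ℝ)) (hΩbd.prod hΩbd).measure_lt_top.ne)).const_mul C₂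
    have hsmeas : Measurable fun p : EuclideanSpace ℝ (Fin N) × EuclideanSpace ℝ (Fin N) =>
      s p.1 p.2 := hscont.measurable
    refine hdom.mono' ((measurable_caratheodory_comp hmeas (fun p => hcont p.1 p.2)
      (by fun_prop)).div (by fun_prop)).aestronglyMeasurable (ae_of_all _ fun ⟨x, y⟩ => ?_)
    simpa only [Pi.add_apply, dist_eq_norm] using
      (hconv x y).norm_apply_div_rpow_div_rpow_le (heven x y) (hG0 x y) hC₂.le (hBf x y).2
        dist_nonneg (hl x y) (hsm.le.trans (hsbounds x y).1) (hsbounds x y).2 hsp.le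
        N.cast_nonneg

/-- Theorem 2.5: `C₀²(Ω) ⊂ W^{s(·,·),G_{x,y}}(Ω)` under the fractional
boundedness condition `C₁ ≤ G(x,y,1) ≤ C₂`. -/
theorem stmt_10 (N : ℕ) (Ω : Set (EuclideanSpace ℝ (Fin N)))
    (hΩopen : IsOpen Ω) (hΩbd : Bornology.IsBounded Ω)
    (s : EuclideanSpace ℝ (Fin N) → EuclideanSpace ℝ (Fin N) → ℝ)
    (hscont : Continuous (fun p : EuclideanSpace ℝ (Fin N) × EuclideanSpace ℝ (Fin N) => s p.1 p.2))
    (hsym : ∀ x y, s x y = s y x)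
    (sm sp : ℝ) (hsm : 0 < sm) (hsp : sp < 1)
    (hsbounds : ∀ x y, sm ≤ s x y ∧ s x y ≤ sp)
    (G : EuclideanSpace ℝ (Fin N) → EuclideanSpace ℝ (Fin N) → ℝ → ℝ)
    -- `G` is a generalized N-function
    (hmeas : ∀ t : ℝ, Measurable (fun p : EuclideanSpace ℝ (Fin N) × EuclideanSpace ℝ (Fin N) => G p.1 p.2 t))
    (heven : ∀ x y t, G x y (-t) = G x y t)
    (hconv : ∀ x y, ConvexOn ℝ Set.univ (G x y))
    (hcont : ∀ x y, Continuous (G x y))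
    (hmono : ∀ x y, StrictMonoOn (G x y) (Set.Ici 0))
    (hG0 : ∀ x y, G x y 0 = 0)
    (hGpos : ∀ x y, ∀ t > (0:ℝ), 0 < G x y t)
    (hsuper : ∀ x y, Tendsto (fun t => G x y t / t) atTop atTop)
    (hzero : ∀ x y, Tendsto (fun t => G x y t / t) (nhdsWithin 0 (Set.Ioi 0)) (nhds 0))
    -- fractional boundedness condition `G ∈ B_f`
    (C₁ C₂ : ℝ) (hC₁ : 0 < C₁) (hC₂ : 0 < C₂)
    (hBf : ∀ x y, C₁ ≤ G x y 1 ∧ G x y 1 ≤ C₂)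
    (u : EuclideanSpace ℝ (Fin N) → ℝ)
    (hu : ContDiff ℝ 2 u) (husupp : HasCompactSupport u)
    (hsupp : tsupport u ⊆ Ω) :
    (∃ l > (0:ℝ), IntegrableOn (fun x => G x x (l * |u x|)) Ω) ∧
    (∃ l > (0:ℝ), IntegrableOn
      (fun p : EuclideanSpace ℝ (Fin N) × EuclideanSpace ℝ (Fin N) =>
        G p.1 p.2 (l * (u p.1 - u p.2) / dist p.1 p.2 ^ s p.1 p.2) / dist p.1 p.2 ^ (N:ℝ))
      (Ω ×ˢ Ω)) :=
  stmt_10_general N Ω hΩbd s hscont sm sp hsm hsp hsbounds G hmeas heven hconv hcont hG0 C₁ C₂ hC₂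
    hBf u hu husupp
end

section
/- Under the hypotheses of the main theorem, for any v₀ ∈ C₀^∞(Ω) \ {0} with v₀ ≥ 0, one has J(t·v₀) < 0 for all sufficiently small t > 0, where J(u) = Ψ(u) − ∫_Ω h(x)|u|^{1−m(x)}/(1−m(x)) dx. -/
open Filter Set MeasureTheory

variable {N : ℕ}

/-- The Luxemburg norm of the Musielak–Orlicz space `L^{Ĝ_x}(Ω)`. -/
noncomputable def luxNorm (Ω : Set (EuclideanSpace ℝ (Fin N)))
    (G : EuclideanSpace ℝ (Fin N) → EuclideanSpace ℝ (Fin N) → ℝ → ℝ)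
    (u : EuclideanSpace ℝ (Fin N) → ℝ) : ℝ :=
  sInf {l : ℝ | 0 < l ∧ ∫ x in Ω, G x x (|u x| / l) ≤ 1}

/-- The Gagliardo-type Luxemburg seminorm `[u]_{s(·,·),G_{x,y}}`. -/
noncomputable def gagSeminorm (Ω : Set (EuclideanSpace ℝ (Fin N)))
    (s : EuclideanSpace ℝ (Fin N) → EuclideanSpace ℝ (Fin N) → ℝ)
    (G : EuclideanSpace ℝ (Fin N) → EuclideanSpace ℝ (Fin N) → ℝ → ℝ)
    (u : EuclideanSpace ℝ (Fin N) → ℝ) : ℝ :=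
  sInf {l : ℝ | 0 < l ∧
    (∫ p : EuclideanSpace ℝ (Fin N) × EuclideanSpace ℝ (Fin N) in Ω ×ˢ Ω,
      G p.1 p.2 ((u p.1 - u p.2) / (l * dist p.1 p.2 ^ s p.1 p.2)) /
        dist p.1 p.2 ^ (N:ℝ)) ≤ 1}

/-- The norm of `W^{s(·,·),G_{x,y}}(Ω)`. -/
noncomputable def WNorm (Ω : Set (EuclideanSpace ℝ (Fin N)))
    (s : EuclideanSpace ℝ (Fin N) → EuclideanSpace ℝ (Fin N) → ℝ)
    (G : EuclideanSpace ℝ (Fin N) → EuclideanSpace ℝ (Fin N) → ℝ → ℝ)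
    (u : EuclideanSpace ℝ (Fin N) → ℝ) : ℝ :=
  luxNorm Ω G u + gagSeminorm Ω s G u

/-- The modular `Ψ(u) = ∫∫ G_{x,y}(D_s u) dμ + ∫ Ĝ_x(|u|)`. -/
noncomputable def PsiFun (Ω : Set (EuclideanSpace ℝ (Fin N)))
    (s : EuclideanSpace ℝ (Fin N) → EuclideanSpace ℝ (Fin N) → ℝ)
    (G : EuclideanSpace ℝ (Fin N) → EuclideanSpace ℝ (Fin N) → ℝ → ℝ)
    (u : EuclideanSpace ℝ (Fin N) → ℝ) : ℝ :=
  (∫ p : EuclideanSpace ℝ (Fin N) × EuclideanSpace ℝ (Fin N) in Ω ×ˢ Ω,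
    G p.1 p.2 ((u p.1 - u p.2) / dist p.1 p.2 ^ s p.1 p.2) / dist p.1 p.2 ^ (N:ℝ)) +
  (∫ x in Ω, G x x (|u x|))

/-- The energy functional `J(u) = Ψ(u) − ∫ h |u|^{1−m}/(1−m)`. -/
noncomputable def JFun (Ω : Set (EuclideanSpace ℝ (Fin N)))
    (s : EuclideanSpace ℝ (Fin N) → EuclideanSpace ℝ (Fin N) → ℝ)
    (G : EuclideanSpace ℝ (Fin N) → EuclideanSpace ℝ (Fin N) → ℝ → ℝ)
    (h m : EuclideanSpace ℝ (Fin N) → ℝ)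
    (u : EuclideanSpace ℝ (Fin N) → ℝ) : ℝ :=
  PsiFun Ω s G u - ∫ x in Ω, h x * |u x| ^ (1 - m x) / (1 - m x)


/-! ### Auxiliary lemmas -/

section AuxLemmas

open Real

/-- If the elasticity is at least `gm`, then `g t / t ^ gm` is monotone on `(0,∞)`. -/
lemma auxJ_mono (g a : ℝ → ℝ) (gm : ℝ)
    (hderiv : ∀ t > (0:ℝ), HasDerivAt g (a t * t) t)
    (hGpos : ∀ t > (0:ℝ), 0 < g t)
    (hlow : ∀ t > (0:ℝ), gm ≤ a t * t ^ 2 / g t) :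
    MonotoneOn (fun t => g t / t ^ gm) (Set.Ioi (0:ℝ)) := by
  have hd : ∀ t ∈ Set.Ioi (0:ℝ), HasDerivAt (fun t => g t / t ^ gm)
      ((a t * t * t ^ gm - g t * (gm * t ^ (gm - 1))) / (t ^ gm) ^ 2) t := by
    intro t ht
    have ht' : (0:ℝ) < t := ht
    exact (hderiv t ht').div (Real.hasDerivAt_rpow_const (Or.inl ht'.ne'))
      (Real.rpow_pos_of_pos ht' gm).ne'
  apply monotoneOn_of_deriv_nonneg (convex_Ioi 0)
  · intro t ht
    exact ((hd t ht).continuousAt).continuousWithinAt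
  · intro t ht
    rw [interior_Ioi] at ht
    exact ((hd t ht).differentiableAt).differentiableWithinAt
  · intro t ht
    rw [interior_Ioi] at ht
    have ht' : (0:ℝ) < t := ht
    rw [(hd t ht).deriv]
    apply div_nonneg _ (sq_nonneg _)
    have hg := hGpos t ht'
    have hkey : gm * g t ≤ a t * t ^ 2 := by
      have h1 := hlow t ht'
      rw [le_div_iff₀ hg] at h1
      linarith
    have h1 : 0 < t ^ (gm - 1) := Real.rpow_pos_of_pos ht' _
    have h2 : t ^ (gm - 1) * t = t ^ gm := by
      rw [← Real.rpow_add_one ht'.ne']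
      congr 1
      ring
    have h3 : a t * t * t ^ gm - g t * (gm * t ^ (gm - 1))
        = t ^ (gm - 1) * (a t * t ^ 2 - gm * g t) := by
      rw [← h2]; ring
    rw [h3]
    exact mul_nonneg h1.le (by linarith)

/-- If the elasticity is at most `gp`, then `g t / t ^ gp` is antitone on `(0,∞)`. -/
lemma auxJ_anti (g a : ℝ → ℝ) (gp : ℝ)
    (hderiv : ∀ t > (0:ℝ), HasDerivAt g (a t * t) t)
    (hGpos : ∀ t > (0:ℝ), 0 < g t)
    (hhigh : ∀ t > (0:ℝ), a t * t ^ 2 / g t ≤ gp) :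
    AntitoneOn (fun t => g t / t ^ gp) (Set.Ioi (0:ℝ)) := by
  have hd : ∀ t ∈ Set.Ioi (0:ℝ), HasDerivAt (fun t => g t / t ^ gp)
      ((a t * t * t ^ gp - g t * (gp * t ^ (gp - 1))) / (t ^ gp) ^ 2) t := by
    intro t ht
    have ht' : (0:ℝ) < t := ht
    exact (hderiv t ht').div (Real.hasDerivAt_rpow_const (Or.inl ht'.ne'))
      (Real.rpow_pos_of_pos ht' gp).ne'
  apply antitoneOn_of_deriv_nonpos (convex_Ioi 0)
  · intro t ht
    exact ((hd t ht).continuousAt).continuousWithinAt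
  · intro t ht
    rw [interior_Ioi] at ht
    exact ((hd t ht).differentiableAt).differentiableWithinAt
  · intro t ht
    rw [interior_Ioi] at ht
    have ht' : (0:ℝ) < t := ht
    rw [(hd t ht).deriv]
    apply div_nonpos_of_nonpos_of_nonneg _ (sq_nonneg _)
    have hg := hGpos t ht'
    have hkey : a t * t ^ 2 ≤ gp * g t := by
      have h1 := hhigh t ht'
      rw [div_le_iff₀ hg] at h1
      linarith
    have h1 : 0 < t ^ (gp - 1) := Real.rpow_pos_of_pos ht' _
    have h2 : t ^ (gp - 1) * t = t ^ gp := by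
      rw [← Real.rpow_add_one ht'.ne']
      congr 1
      ring
    have h3 : a t * t * t ^ gp - g t * (gp * t ^ (gp - 1))
        = t ^ (gp - 1) * (a t * t ^ 2 - gp * g t) := by
      rw [← h2]; ring
    rw [h3]
    exact mul_nonpos_of_nonneg_of_nonpos h1.le (by linarith)

/-- Finiteness of the singular integral `∫_{B(0,D)} ‖z‖^(γ-N)` for `γ > 0`. -/
lemma auxJ_lintegral_ball (N : ℕ) (hN : 0 < N) {γ D : ℝ} (hγ : 0 < γ) (hD : 0 < D) :
    ∫⁻ z in Metric.ball (0 : EuclideanSpace ℝ (Fin N)) D,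
      ENNReal.ofReal (‖z‖ ^ (γ - (N:ℝ))) < ⊤ := by
  classical
  haveI : Nontrivial (EuclideanSpace ℝ (Fin N)) :=
    Module.nontrivial_of_finrank_pos (R := ℝ)
      (by rw [finrank_euclideanSpace_fin]; exact hN)
  set A : ℕ → Set (EuclideanSpace ℝ (Fin N)) := fun k =>
    Metric.ball 0 (D * (2:ℝ)⁻¹ ^ k) \ Metric.ball 0 (D * (2:ℝ)⁻¹ ^ (k+1)) with hA
  have hcover : Metric.ball (0 : EuclideanSpace ℝ (Fin N)) D ⊆ {0} ∪ ⋃ k, A k := by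
    intro z hz
    rcases eq_or_ne z 0 with rfl | hz0
    · exact Or.inl rfl
    refine Or.inr ?_
    have hq : 0 < ‖z‖ := norm_pos_iff.mpr hz0
    have hqD : ‖z‖ < D := by simpa [mem_ball_zero_iff] using hz
    have hex : ∃ k, D * (2:ℝ)⁻¹ ^ k ≤ ‖z‖ := by
      obtain ⟨n, hn⟩ := exists_pow_lt_of_lt_one (div_pos hq hD)
        (by norm_num : (2:ℝ)⁻¹ < 1)
      refine ⟨n, le_of_lt ?_⟩
      rw [mul_comm]
      exact (lt_div_iff₀ hD).mp hn
    have hk₀ : D * (2:ℝ)⁻¹ ^ (Nat.find hex) ≤ ‖z‖ := Nat.find_spec hex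
    have hk₀ne : Nat.find hex ≠ 0 := by
      intro h0
      rw [h0] at hk₀
      simp only [pow_zero, mul_one] at hk₀
      linarith
    obtain ⟨j, hj⟩ := Nat.exists_eq_succ_of_ne_zero hk₀ne
    have hjlt : ¬ (D * (2:ℝ)⁻¹ ^ j ≤ ‖z‖) := Nat.find_min hex (by omega)
    refine mem_iUnion.mpr ⟨j, ?_⟩
    constructor
    · rw [mem_ball_zero_iff]
      exact lt_of_not_ge hjlt
    · rw [Metric.mem_ball, not_lt, dist_zero_right]
      rw [hj] at hk₀
      exact hk₀
  have hμA : ∀ k, volume (A k) ≤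
      ENNReal.ofReal ((D * (2:ℝ)⁻¹ ^ k) ^ N) *
        volume (Metric.ball (0 : EuclideanSpace ℝ (Fin N)) 1) := by
    intro k
    calc volume (A k) ≤ volume (Metric.ball (0 : EuclideanSpace ℝ (Fin N)) (D * (2:ℝ)⁻¹ ^ k)) :=
          measure_mono Set.diff_subset
    _ = ENNReal.ofReal ((D * (2:ℝ)⁻¹ ^ k) ^
          Module.finrank ℝ (EuclideanSpace ℝ (Fin N))) * volume (Metric.ball 0 1) :=
          Measure.addHaar_ball volume 0 (by positivity)
    _ = _ := by rw [finrank_euclideanSpace_fin]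
  have hptbound : ∀ k, ∀ z ∈ A k, ‖z‖ ^ (γ - (N:ℝ)) ≤
      (D * (2:ℝ)⁻¹ ^ k) ^ γ * (D * (2:ℝ)⁻¹ ^ (k+1)) ^ (-(N:ℝ)) := by
    intro k z hz
    obtain ⟨hzu, hzl⟩ := hz
    rw [mem_ball_zero_iff] at hzu
    rw [Metric.mem_ball, dist_zero_right, not_lt] at hzl
    have hl : 0 < D * (2:ℝ)⁻¹ ^ (k+1) := by positivity
    have hzpos : 0 < ‖z‖ := lt_of_lt_of_le hl hzl
    have h1 : ‖z‖ ^ (γ - (N:ℝ)) = ‖z‖ ^ γ * ‖z‖ ^ (-(N:ℝ)) := by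
      rw [sub_eq_add_neg, Real.rpow_add hzpos]
    rw [h1]
    have h2 : ‖z‖ ^ γ ≤ (D * (2:ℝ)⁻¹ ^ k) ^ γ :=
      Real.rpow_le_rpow (norm_nonneg z) hzu.le hγ.le
    have h3 : ‖z‖ ^ (-(N:ℝ)) ≤ (D * (2:ℝ)⁻¹ ^ (k+1)) ^ (-(N:ℝ)) := by
      rw [Real.rpow_neg (norm_nonneg z), Real.rpow_neg hl.le]
      have h4 : (D * (2:ℝ)⁻¹ ^ (k+1)) ^ (N:ℝ) ≤ ‖z‖ ^ (N:ℝ) :=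
        Real.rpow_le_rpow hl.le hzl (Nat.cast_nonneg N)
      exact inv_anti₀ (Real.rpow_pos_of_pos hl _) h4
    exact mul_le_mul h2 h3 (Real.rpow_nonneg (norm_nonneg z) _) (Real.rpow_nonneg (by positivity) _)
  have hterm : ∀ k : ℕ,
      (∫⁻ z in A k, ENNReal.ofReal (‖z‖ ^ (γ - (N:ℝ)))) ≤
        ENNReal.ofReal ((D ^ γ * 2 ^ (N:ℝ)) * ((2:ℝ)⁻¹ ^ γ) ^ k) *
          volume (Metric.ball (0 : EuclideanSpace ℝ (Fin N)) 1) := by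
    intro k
    have hu0 : 0 < D * (2:ℝ)⁻¹ ^ k := by positivity
    calc (∫⁻ z in A k, ENNReal.ofReal (‖z‖ ^ (γ - (N:ℝ))))
        ≤ ∫⁻ _ in A k, ENNReal.ofReal ((D * (2:ℝ)⁻¹ ^ k) ^ γ *
            (D * (2:ℝ)⁻¹ ^ (k+1)) ^ (-(N:ℝ))) :=
          setLIntegral_mono measurable_const
            (fun z hz => ENNReal.ofReal_le_ofReal (hptbound k z hz))
    _ = ENNReal.ofReal ((D * (2:ℝ)⁻¹ ^ k) ^ γ * (D * (2:ℝ)⁻¹ ^ (k+1)) ^ (-(N:ℝ))) *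
          volume (A k) := setLIntegral_const _ _
    _ ≤ ENNReal.ofReal ((D * (2:ℝ)⁻¹ ^ k) ^ γ * (D * (2:ℝ)⁻¹ ^ (k+1)) ^ (-(N:ℝ))) *
          (ENNReal.ofReal ((D * (2:ℝ)⁻¹ ^ k) ^ N) *
            volume (Metric.ball (0 : EuclideanSpace ℝ (Fin N)) 1)) :=
          mul_le_mul_right (hμA k) _
    _ = ENNReal.ofReal (((D * (2:ℝ)⁻¹ ^ k) ^ γ * (D * (2:ℝ)⁻¹ ^ (k+1)) ^ (-(N:ℝ))) *
          (D * (2:ℝ)⁻¹ ^ k) ^ N) *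
          volume (Metric.ball (0 : EuclideanSpace ℝ (Fin N)) 1) := by
        rw [← mul_assoc, ← ENNReal.ofReal_mul (by positivity)]
    _ = ENNReal.ofReal ((D ^ γ * 2 ^ (N:ℝ)) * ((2:ℝ)⁻¹ ^ γ) ^ k) *
          volume (Metric.ball (0 : EuclideanSpace ℝ (Fin N)) 1) := by
        congr 2
        have h2 : (D * (2:ℝ)⁻¹ ^ (k+1)) = (D * (2:ℝ)⁻¹ ^ k) * 2⁻¹ := by ring
        rw [h2, Real.mul_rpow hu0.le (by norm_num : (0:ℝ) ≤ 2⁻¹)]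
        have e1 : ((2:ℝ)⁻¹) ^ (-(N:ℝ)) = (2:ℝ) ^ (N:ℝ) := by
          rw [Real.inv_rpow (by norm_num : (0:ℝ) ≤ 2), Real.rpow_neg (by norm_num : (0:ℝ) ≤ 2),
            inv_inv]
        rw [e1, ← Real.rpow_natCast (D * (2:ℝ)⁻¹ ^ k) N]
        have e2 : (D * (2:ℝ)⁻¹ ^ k) ^ γ *
            ((D * (2:ℝ)⁻¹ ^ k) ^ (-(N:ℝ)) * 2 ^ (N:ℝ)) * (D * (2:ℝ)⁻¹ ^ k) ^ (N:ℝ)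
            = ((D * (2:ℝ)⁻¹ ^ k) ^ (-(N:ℝ)) * (D * (2:ℝ)⁻¹ ^ k) ^ (N:ℝ)) *
              ((D * (2:ℝ)⁻¹ ^ k) ^ γ * 2 ^ (N:ℝ)) := by ring
        rw [e2, ← Real.rpow_add hu0, neg_add_cancel, Real.rpow_zero, one_mul]
        have e3 : (D * (2:ℝ)⁻¹ ^ k) ^ γ = D ^ γ * ((2:ℝ)⁻¹ ^ γ) ^ k := by
          rw [Real.mul_rpow hD.le (by positivity)]
          congr 1
          rw [← Real.rpow_natCast ((2:ℝ)⁻¹) k, ← Real.rpow_mul (by norm_num : (0:ℝ) ≤ 2⁻¹),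
            mul_comm (k:ℝ) γ, Real.rpow_mul (by norm_num : (0:ℝ) ≤ 2⁻¹), Real.rpow_natCast]
        rw [e3]
        ring
  have hr1 : ENNReal.ofReal ((2:ℝ)⁻¹ ^ γ) < 1 :=
    ENNReal.ofReal_lt_one.mpr (Real.rpow_lt_one (by norm_num) (by norm_num) hγ)
  calc (∫⁻ z in Metric.ball (0 : EuclideanSpace ℝ (Fin N)) D,
        ENNReal.ofReal (‖z‖ ^ (γ - (N:ℝ))))
      ≤ ∫⁻ z in ({0} ∪ ⋃ k, A k : Set (EuclideanSpace ℝ (Fin N))),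
          ENNReal.ofReal (‖z‖ ^ (γ - (N:ℝ))) := lintegral_mono_set hcover
  _ ≤ (∫⁻ z in ({0} : Set (EuclideanSpace ℝ (Fin N))), ENNReal.ofReal (‖z‖ ^ (γ - (N:ℝ))))
        + ∫⁻ z in (⋃ k, A k), ENNReal.ofReal (‖z‖ ^ (γ - (N:ℝ))) := lintegral_union_le _ _ _
  _ ≤ 0 + ∑' k, ∫⁻ z in A k, ENNReal.ofReal (‖z‖ ^ (γ - (N:ℝ))) := by
      apply add_le_add
      · rw [setLIntegral_measure_zero _ _ (measure_singleton 0)]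
      · exact lintegral_iUnion_le _ _
  _ ≤ 0 + ∑' k, ENNReal.ofReal ((D ^ γ * 2 ^ (N:ℝ)) * ((2:ℝ)⁻¹ ^ γ) ^ k) *
        volume (Metric.ball (0 : EuclideanSpace ℝ (Fin N)) 1) :=
      add_le_add le_rfl (ENNReal.tsum_le_tsum hterm)
  _ < ⊤ := by
      rw [zero_add]
      have e4 : ∀ k : ℕ, ENNReal.ofReal ((D ^ γ * 2 ^ (N:ℝ)) * ((2:ℝ)⁻¹ ^ γ) ^ k) *
          volume (Metric.ball (0 : EuclideanSpace ℝ (Fin N)) 1)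
          = ENNReal.ofReal (D ^ γ * 2 ^ (N:ℝ)) * (ENNReal.ofReal ((2:ℝ)⁻¹ ^ γ)) ^ k *
            volume (Metric.ball (0 : EuclideanSpace ℝ (Fin N)) 1) := by
        intro k
        rw [ENNReal.ofReal_mul (by positivity), ENNReal.ofReal_pow (by positivity)]
      simp_rw [e4]
      rw [ENNReal.tsum_mul_right, ENNReal.tsum_mul_left, ENNReal.tsum_geometric]
      apply ENNReal.mul_lt_top
      · apply ENNReal.mul_lt_top ENNReal.ofReal_lt_top
        rw [ENNReal.inv_lt_top]
        exact tsub_pos_of_lt hr1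
      · exact measure_ball_lt_top
/-- Integrability of the singular kernel `dist(x,y)^(γ-N)` on `Ω × Ω`. -/
lemma auxJ_integrableOn_dist (N : ℕ) (hN : 0 < N) (Ω : Set (EuclideanSpace ℝ (Fin N)))
    (hΩmeas : MeasurableSet Ω) {R : ℝ} (hR : Ω ⊆ Metric.ball 0 R)
    {D : ℝ} (hD0 : 0 < D) (hdistD : ∀ x ∈ Ω, ∀ y ∈ Ω, dist x y < D)
    {γ : ℝ} (hγ : 0 < γ) :
    IntegrableOn (fun q : EuclideanSpace ℝ (Fin N) × EuclideanSpace ℝ (Fin N) =>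
      dist q.1 q.2 ^ (γ - (N:ℝ))) (Ω ×ˢ Ω) := by
  have hm1 : Measurable fun x : ℝ => x ^ (γ - (N:ℝ)) := by
    apply measurable_of_continuousOn_compl_singleton (0:ℝ)
    intro x hx
    exact (Real.continuousAt_rpow_const x _ (Or.inl hx)).continuousWithinAt
  have hmd : Measurable fun q : EuclideanSpace ℝ (Fin N) × EuclideanSpace ℝ (Fin N) =>
      dist q.1 q.2 := continuous_dist.measurable
  have hmeas : Measurable fun q : EuclideanSpace ℝ (Fin N) × EuclideanSpace ℝ (Fin N) =>
      dist q.1 q.2 ^ (γ - (N:ℝ)) := hm1.comp hmd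
  refine ⟨hmeas.aestronglyMeasurable, ?_⟩
  rw [hasFiniteIntegral_iff_ofReal (Filter.Eventually.of_forall
    (fun q => Real.rpow_nonneg dist_nonneg _))]
  have hprodrw : (volume : Measure (EuclideanSpace ℝ (Fin N) ×
      EuclideanSpace ℝ (Fin N))).restrict (Ω ×ˢ Ω)
      = ((volume : Measure (EuclideanSpace ℝ (Fin N))).restrict Ω).prod
        ((volume : Measure (EuclideanSpace ℝ (Fin N))).restrict Ω) := by
    rw [Measure.volume_eq_prod, Measure.prod_restrict]
  rw [hprodrw, lintegral_prod _ (hmeas.ennreal_ofReal.aemeasurable)]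
  set K : ENNReal := ∫⁻ z in Metric.ball (0 : EuclideanSpace ℝ (Fin N)) D,
    ENNReal.ofReal (‖z‖ ^ (γ - (N:ℝ))) with hK
  have hKfin : K < ⊤ := auxJ_lintegral_ball N hN hγ hD0
  have hinner : ∀ x ∈ Ω,
      (∫⁻ y in Ω, ENNReal.ofReal (dist x y ^ (γ - (N:ℝ)))) ≤ K := by
    intro x hx
    have hsub : Ω ⊆ Metric.ball x D := by
      intro y hy
      rw [Metric.mem_ball, dist_comm]
      exact hdistD x hx y hy
    calc (∫⁻ y in Ω, ENNReal.ofReal (dist x y ^ (γ - (N:ℝ))))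
        ≤ ∫⁻ y in Metric.ball x D, ENNReal.ofReal (dist x y ^ (γ - (N:ℝ))) :=
          lintegral_mono_set hsub
    _ = ∫⁻ y, (Metric.ball x D).indicator
          (fun y => ENNReal.ofReal (dist x y ^ (γ - (N:ℝ)))) y :=
          (lintegral_indicator Metric.isOpen_ball.measurableSet _).symm
    _ = ∫⁻ y, (Metric.ball (0 : EuclideanSpace ℝ (Fin N)) D).indicator
          (fun z => ENNReal.ofReal (‖z‖ ^ (γ - (N:ℝ)))) (y - x) := by
        apply lintegral_congr
        intro y
        by_cases hy : y ∈ Metric.ball x D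
        · rw [Set.indicator_of_mem hy, Set.indicator_of_mem]
          · congr 2
            rw [dist_comm, dist_eq_norm]
          · rw [mem_ball_zero_iff, ← dist_eq_norm]
            exact hy
        · rw [Set.indicator_of_notMem hy, Set.indicator_of_notMem]
          intro hy'
          apply hy
          rw [mem_ball_zero_iff, ← dist_eq_norm] at hy'
          exact hy'
    _ = ∫⁻ z, (Metric.ball (0 : EuclideanSpace ℝ (Fin N)) D).indicator
          (fun z => ENNReal.ofReal (‖z‖ ^ (γ - (N:ℝ)))) z := by
        have := lintegral_add_right_eq_self (μ := (volume : Measure (EuclideanSpace ℝ (Fin N))))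
          (fun z => (Metric.ball (0 : EuclideanSpace ℝ (Fin N)) D).indicator
            (fun z => ENNReal.ofReal (‖z‖ ^ (γ - (N:ℝ)))) z) (-x)
        simp only [← sub_eq_add_neg] at this
        exact this
    _ = K := lintegral_indicator Metric.isOpen_ball.measurableSet _
  calc (∫⁻ x in Ω, ∫⁻ y in Ω, ENNReal.ofReal (dist x y ^ (γ - (N:ℝ))))
      ≤ ∫⁻ _ in Ω, K := setLIntegral_mono measurable_const hinner
  _ = K * volume Ω := setLIntegral_const _ _
  _ < ⊤ := ENNReal.mul_lt_top hKfin
      (lt_of_le_of_lt (measure_mono hR) measure_ball_lt_top)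

end AuxLemmas
set_option maxHeartbeats 2000000 in
/-- Lemma 3.5: for `v₀ ∈ C₀^∞(Ω) \ {0}`, `J(t v₀) < 0` for `t > 0` small. -/
theorem stmt_13 (N : ℕ) (Ω : Set (EuclideanSpace ℝ (Fin N)))
    (hΩopen : IsOpen Ω) (hΩbd : Bornology.IsBounded Ω)
    (s : EuclideanSpace ℝ (Fin N) → EuclideanSpace ℝ (Fin N) → ℝ)
    (hsym : ∀ x y, s x y = s y x)
    (sm sp : ℝ) (hsm : 0 < sm) (hsp : sp < 1)
    (hsbounds : ∀ x y, sm ≤ s x y ∧ s x y ≤ sp)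
    (G : EuclideanSpace ℝ (Fin N) → EuclideanSpace ℝ (Fin N) → ℝ → ℝ)
    (aG : EuclideanSpace ℝ (Fin N) → EuclideanSpace ℝ (Fin N) → ℝ → ℝ)
    (heven : ∀ x y t, G x y (-t) = G x y t)
    (hconv : ∀ x y, ConvexOn ℝ Set.univ (G x y))
    (hG0 : ∀ x y, G x y 0 = 0)
    (hGpos : ∀ x y, ∀ t > (0:ℝ), 0 < G x y t)
    (hderiv : ∀ x y, ∀ t > (0:ℝ), HasDerivAt (G x y) (aG x y t * t) t)
    (gm gp : ℝ) (hgm : 1 < gm) (hgmgp : gm ≤ gp)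
    (hratio : ∀ x y, ∀ t > (0:ℝ),
      gm ≤ aG x y t * t ^ 2 / G x y t ∧ aG x y t * t ^ 2 / G x y t ≤ gp)
    -- fractional boundedness condition `G ∈ B_f`
    (C₁ C₂ : ℝ) (hC₁ : 0 < C₁) (hC₂ : 0 < C₂)
    (hBf : ∀ x y, C₁ ≤ G x y 1 ∧ G x y 1 ≤ C₂)
    (p : EuclideanSpace ℝ (Fin N) → EuclideanSpace ℝ (Fin N) → ℝ)
    (hp : Continuous (fun q : EuclideanSpace ℝ (Fin N) × EuclideanSpace ℝ (Fin N) => p q.1 q.2))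
    (hpsym : ∀ x y, p x y = p y x)
    (hpbounds : ∀ x y, 1 < p x y ∧ s x y * p x y < N)
    (M : ℝ) (hM : 0 < M)
    (hpG : ∀ x y, ∀ t : ℝ, |t| ^ p x y ≤ M * G x y t)
    (m : EuclideanSpace ℝ (Fin N) → ℝ) (hmcont : Continuous m)
    (hmrange : ∀ x, 0 < m x ∧ m x < 1)
    (r : EuclideanSpace ℝ (Fin N) → ℝ) (hrcont : Continuous r)
    (hr : ∀ x, 1 < r x ∧ r x < N * p x x / (N - s x x * p x x))
    (h : EuclideanSpace ℝ (Fin N) → ℝ) (hhcont : Continuous h)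
    (hhpos : ∀ x ∈ Ω, 0 < h x)
    (hhint : IntegrableOn (fun x => h x ^ (r x / (r x + m x - 1))) Ω)
    (v₀ : EuclideanSpace ℝ (Fin N) → ℝ)
    (hv₀smooth : ContDiff ℝ (⊤ : ℕ∞) v₀) (hv₀supp : HasCompactSupport v₀)
    (hv₀in : tsupport v₀ ⊆ Ω) (hv₀ne : v₀ ≠ 0) (hv₀nonneg : ∀ x, 0 ≤ v₀ x) :
    ∃ t₀ > (0:ℝ), ∀ t : ℝ, 0 < t → t < t₀ →
      JFun Ω s G h m (fun x => t * v₀ x) < 0 := by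
  classical
  -- `N` is positive
  have hN : 0 < N := by
    rcases Nat.eq_zero_or_pos N with hN0 | hN
    · exfalso
      have h1 := (hpbounds 0 0).1
      have h2 := (hpbounds 0 0).2
      have h3 := (hsbounds 0 0).1
      subst hN0
      push_cast at h2
      nlinarith
    · exact hN
  have hΩmeas : MeasurableSet Ω := hΩopen.measurableSet
  -- bounded geometry
  obtain ⟨R, hR⟩ := hΩbd.subset_ball 0
  set D : ℝ := max (2 * |R|) 1 with hDdef
  have hD1 : (1:ℝ) ≤ D := le_max_right _ _
  have hD0 : (0:ℝ) < D := lt_of_lt_of_le one_pos hD1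
  have hdistD : ∀ x ∈ Ω, ∀ y ∈ Ω, dist x y < D := by
    intro x hx y hy
    have h1 := hR hx
    have h2 := hR hy
    rw [Metric.mem_ball] at h1 h2
    have h3 : dist x y ≤ dist x 0 + dist y 0 := dist_triangle_right x y 0
    have h4 : 2 * |R| ≤ D := le_max_left _ _
    have h5 := le_abs_self R
    linarith
  have hμΩ : volume Ω < ⊤ := lt_of_le_of_lt (measure_mono hR) measure_ball_lt_top
  -- facts about `v₀`
  obtain ⟨L, hL⟩ := ContDiff.lipschitzWith_of_hasCompactSupport hv₀supp hv₀smooth (by simp)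
  obtain ⟨S, hS⟩ := hv₀supp.exists_bound_of_continuous hv₀smooth.continuous
  have hS0 : 0 ≤ S := le_trans (norm_nonneg _) (hS 0)
  have hSabs : ∀ x, |v₀ x| ≤ S := by
    intro x
    have := hS x
    rwa [Real.norm_eq_abs] at this
  -- exponents
  have hgm0 : (0:ℝ) < gm := by linarith
  have hgp0 : (0:ℝ) < gp := by linarith
  have hsp1 : (0:ℝ) < 1 - sp := by linarith
  have hsmsp : sm ≤ sp := le_trans (hsbounds 0 0).1 (hsbounds 0 0).2
  set β : ℝ := (1 - sp) * gm with hβdef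
  have hβ0 : 0 < β := mul_pos hsp1 hgm0
  set Em : ℝ := (1 - sm) * gp with hEmdef
  have hEm0 : 0 ≤ Em := mul_nonneg (by linarith) hgp0.le
  set Kst : ℝ := (max 1 D) ^ Em with hKstdef
  have hKst1 : (1:ℝ) ≤ Kst := Real.one_le_rpow (le_max_left _ _) hEm0
  have hKst0 : (0:ℝ) < Kst := lt_of_lt_of_le one_pos hKst1
  -- uniform comparison of powers of the distance
  have hdpow : ∀ d : ℝ, 0 < d → d < D → ∀ e : ℝ, β ≤ e → e ≤ Em →
      d ^ e ≤ Kst * d ^ β := by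
    intro d hd hdD e hβe heE
    have h1 : d ^ e = d ^ β * d ^ (e - β) := by
      rw [← Real.rpow_add hd]
      congr 1
      ring
    rw [h1]
    have hdb : (0:ℝ) < d ^ β := Real.rpow_pos_of_pos hd _
    rcases le_or_gt d 1 with hd1 | hd1
    · have h2 : d ^ (e - β) ≤ 1 := Real.rpow_le_one hd.le hd1 (by linarith)
      nlinarith
    · have h2 : d ^ (e - β) ≤ (max 1 D) ^ (e - β) :=
        Real.rpow_le_rpow hd.le (le_trans hdD.le (le_max_right _ _)) (by linarith)
      have h3 : (max 1 D) ^ (e - β) ≤ Kst := by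
        rw [hKstdef]
        exact Real.rpow_le_rpow_of_exponent_le (le_max_left _ _) (by linarith)
      nlinarith
  -- nonnegativity of G
  have hGge0 : ∀ x y u, 0 ≤ G x y u := by
    intro x y u
    rcases lt_trichotomy u 0 with hu | hu | hu
    · have h1 := heven x y (-u)
      rw [neg_neg] at h1
      rw [h1]
      exact (hGpos x y (-u) (by linarith)).le
    · rw [hu, hG0]
    · exact (hGpos x y u hu).le
  -- scaling estimate
  have hscale : ∀ x y (u t : ℝ), 0 < t → t ≤ 1 → G x y (t * u) ≤ t ^ gm * G x y u := by
    intro x y u t ht ht1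
    have habs : ∀ v : ℝ, G x y v = G x y |v| := by
      intro v
      rcases le_or_gt 0 v with hv | hv
      · rw [abs_of_nonneg hv]
      · rw [abs_of_neg hv, heven]
    rcases eq_or_ne u 0 with rfl | hu
    · rw [mul_zero, hG0, mul_zero]
    · have hu' : 0 < |u| := abs_pos.mpr hu
      have h1 : G x y (t * u) = G x y (t * |u|) := by
        rw [habs (t * u), abs_mul, abs_of_pos ht]
      rw [h1, habs u]
      have hmono := auxJ_mono (G x y) (aG x y) gm (hderiv x y) (hGpos x y)
        (fun τ hτ => (hratio x y τ hτ).1)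
      have hmem1 : t * |u| ∈ Set.Ioi (0:ℝ) := Set.mem_Ioi.mpr (mul_pos ht hu')
      have hmem2 : |u| ∈ Set.Ioi (0:ℝ) := Set.mem_Ioi.mpr hu'
      have hle : t * |u| ≤ |u| := by nlinarith
      have h2 := hmono hmem1 hmem2 hle
      simp only at h2
      have hA : (0:ℝ) < (t * |u|) ^ gm := Real.rpow_pos_of_pos (mul_pos ht hu') _
      have hB : (0:ℝ) < |u| ^ gm := Real.rpow_pos_of_pos hu' _
      rw [div_le_div_iff₀ hA hB] at h2
      have hpow : (t * |u|) ^ gm = t ^ gm * |u| ^ gm := Real.mul_rpow ht.le (abs_nonneg u)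
      rw [hpow] at h2
      have h3 : G x y (t * |u|) * |u| ^ gm ≤ (t ^ gm * G x y |u|) * |u| ^ gm := by
        linear_combination h2
      exact le_of_mul_le_mul_right h3 hB
  -- growth estimate
  have hGbound : ∀ x y (u : ℝ), 0 ≤ u → G x y u ≤ C₂ * (u ^ gm + u ^ gp) := by
    intro x y u hu
    rcases eq_or_lt_of_le hu with rfl | hu'
    · rw [hG0, Real.zero_rpow (by positivity : gm ≠ 0), Real.zero_rpow (by positivity : gp ≠ 0)]
      norm_num
    · have hG1 : G x y 1 ≤ C₂ := (hBf x y).2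
      have hum : (0:ℝ) ≤ u ^ gm := Real.rpow_nonneg hu _
      have hup : (0:ℝ) ≤ u ^ gp := Real.rpow_nonneg hu _
      rcases le_or_gt u 1 with hu1 | hu1
      · have hmono := auxJ_mono (G x y) (aG x y) gm (hderiv x y) (hGpos x y)
          (fun τ hτ => (hratio x y τ hτ).1)
        have h2 := hmono (Set.mem_Ioi.mpr hu') (Set.mem_Ioi.mpr one_pos) hu1
        simp only [Real.one_rpow, div_one] at h2
        have h3 : (0:ℝ) < u ^ gm := Real.rpow_pos_of_pos hu' _
        rw [div_le_iff₀ h3] at h2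
        calc G x y u ≤ G x y 1 * u ^ gm := h2
        _ ≤ C₂ * u ^ gm := mul_le_mul_of_nonneg_right hG1 hum
        _ ≤ C₂ * (u ^ gm + u ^ gp) := mul_le_mul_of_nonneg_left (by linarith) hC₂.le
      · have hanti := auxJ_anti (G x y) (aG x y) gp (hderiv x y) (hGpos x y)
          (fun τ hτ => (hratio x y τ hτ).2)
        have h2 := hanti (Set.mem_Ioi.mpr one_pos) (Set.mem_Ioi.mpr (lt_trans one_pos hu1)) hu1.le
        simp only [Real.one_rpow, div_one] at h2
        have h3 : (0:ℝ) < u ^ gp := Real.rpow_pos_of_pos hu' _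
        rw [div_le_iff₀ h3] at h2
        calc G x y u ≤ G x y 1 * u ^ gp := h2
        _ ≤ C₂ * u ^ gp := mul_le_mul_of_nonneg_right hG1 hup
        _ ≤ C₂ * (u ^ gm + u ^ gp) := mul_le_mul_of_nonneg_left (by linarith) hC₂.le
  -- pointwise bound for the Gagliardo part
  set Cg : ℝ := C₂ * (((L:ℝ)) ^ gm + ((L:ℝ)) ^ gp) * Kst with hCgdef
  have hCg0 : 0 ≤ Cg := by positivity
  have hGag : ∀ t : ℝ, 0 < t → t ≤ 1 → ∀ x ∈ Ω, ∀ y ∈ Ω,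
      G x y ((t * v₀ x - t * v₀ y) / dist x y ^ s x y) / dist x y ^ (N:ℝ)
        ≤ t ^ gm * (Cg * dist x y ^ (β - (N:ℝ))) := by
    intro t ht ht1 x hx y hy
    rcases eq_or_ne x y with rfl | hxy
    · rw [dist_self, sub_self, zero_div, hG0, zero_div]
      exact mul_nonneg (Real.rpow_nonneg ht.le _)
        (mul_nonneg hCg0 (Real.rpow_nonneg le_rfl _))
    · have hd0 : 0 < dist x y := dist_pos.mpr hxy
      have hdD : dist x y < D := hdistD x hx y hy
      have hds : 0 < dist x y ^ s x y := Real.rpow_pos_of_pos hd0 _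
      set d : ℝ := dist x y with hddef
      set ζ : ℝ := (v₀ x - v₀ y) / d ^ s x y with hζdef
      have harg : (t * v₀ x - t * v₀ y) / d ^ s x y = t * ζ := by
        rw [hζdef]
        ring
      rw [harg]
      have habs : G x y (t * ζ) = G x y (t * |ζ|) := by
        rcases le_or_gt 0 ζ with hζ | hζ
        · rw [abs_of_nonneg hζ]
        · rw [abs_of_neg hζ, show t * -ζ = -(t * ζ) by ring, heven]
      rw [habs]
      have step1 : G x y (t * |ζ|) ≤ t ^ gm * G x y |ζ| := hscale x y |ζ| t ht ht1
      have step2 : G x y |ζ| ≤ C₂ * (|ζ| ^ gm + |ζ| ^ gp) := hGbound x y |ζ| (abs_nonneg ζ)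
      have hζle : |ζ| ≤ (L:ℝ) * d ^ (1 - s x y) := by
        rw [hζdef, abs_div, abs_of_pos hds]
        have h1 : |v₀ x - v₀ y| ≤ (L:ℝ) * d := by
          have h2 := hL.dist_le_mul x y
          rw [Real.dist_eq] at h2
          exact h2
        have h2 : (L:ℝ) * d ^ (1 - s x y) = (L:ℝ) * d / d ^ s x y := by
          rw [mul_div_assoc]
          congr 1
          rw [Real.rpow_sub hd0, Real.rpow_one]
        rw [h2]
        exact (div_le_div_iff_of_pos_right hds).mpr h1
      have hbgm : |ζ| ^ gm ≤ (L:ℝ) ^ gm * (Kst * d ^ β) := by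
        calc |ζ| ^ gm ≤ ((L:ℝ) * d ^ (1 - s x y)) ^ gm :=
              Real.rpow_le_rpow (abs_nonneg _) hζle hgm0.le
        _ = (L:ℝ) ^ gm * (d ^ (1 - s x y)) ^ gm :=
              Real.mul_rpow (by positivity) (by positivity)
        _ = (L:ℝ) ^ gm * d ^ ((1 - s x y) * gm) := by rw [← Real.rpow_mul hd0.le]
        _ ≤ (L:ℝ) ^ gm * (Kst * d ^ β) := by
            apply mul_le_mul_of_nonneg_left _ (by positivity)
            apply hdpow d hd0 hdD
            · have h5 := (hsbounds x y).2
              rw [hβdef]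
              nlinarith
            · have h5 := (hsbounds x y).1
              have h6 := (hsbounds x y).2
              rw [hEmdef]
              nlinarith [mul_le_mul_of_nonneg_left hgmgp
                (show (0:ℝ) ≤ 1 - s x y by nlinarith),
                mul_le_mul_of_nonneg_right (show 1 - s x y ≤ 1 - sm by nlinarith) hgp0.le]
      have hbgp : |ζ| ^ gp ≤ (L:ℝ) ^ gp * (Kst * d ^ β) := by
        calc |ζ| ^ gp ≤ ((L:ℝ) * d ^ (1 - s x y)) ^ gp :=
              Real.rpow_le_rpow (abs_nonneg _) hζle hgp0.le
        _ = (L:ℝ) ^ gp * (d ^ (1 - s x y)) ^ gp :=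
              Real.mul_rpow (by positivity) (by positivity)
        _ = (L:ℝ) ^ gp * d ^ ((1 - s x y) * gp) := by rw [← Real.rpow_mul hd0.le]
        _ ≤ (L:ℝ) ^ gp * (Kst * d ^ β) := by
            apply mul_le_mul_of_nonneg_left _ (by positivity)
            apply hdpow d hd0 hdD
            · have h5 := (hsbounds x y).2
              rw [hβdef]
              nlinarith [mul_le_mul_of_nonneg_right hgmgp
                (show (0:ℝ) ≤ 1 - sp by linarith),
                mul_le_mul_of_nonneg_right (show 1 - sp ≤ 1 - s x y by nlinarith) hgp0.le]
            · have h5 := (hsbounds x y).1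
              rw [hEmdef]
              nlinarith
      have hcomb : G x y (t * |ζ|) ≤ t ^ gm * (Cg * d ^ β) := by
        calc G x y (t * |ζ|) ≤ t ^ gm * G x y |ζ| := step1
        _ ≤ t ^ gm * (C₂ * (|ζ| ^ gm + |ζ| ^ gp)) :=
            mul_le_mul_of_nonneg_left step2 (Real.rpow_nonneg ht.le _)
        _ ≤ t ^ gm * (Cg * d ^ β) := by
            apply mul_le_mul_of_nonneg_left _ (Real.rpow_nonneg ht.le _)
            calc C₂ * (|ζ| ^ gm + |ζ| ^ gp)
                ≤ C₂ * ((L:ℝ) ^ gm * (Kst * d ^ β) + (L:ℝ) ^ gp * (Kst * d ^ β)) :=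
                  mul_le_mul_of_nonneg_left (add_le_add hbgm hbgp) hC₂.le
            _ = Cg * d ^ β := by rw [hCgdef]; ring
      have hdN : (0:ℝ) < d ^ (N:ℝ) := Real.rpow_pos_of_pos hd0 _
      calc G x y (t * |ζ|) / d ^ (N:ℝ) ≤ (t ^ gm * (Cg * d ^ β)) / d ^ (N:ℝ) :=
            (div_le_div_iff_of_pos_right hdN).mpr hcomb
      _ = t ^ gm * (Cg * d ^ (β - (N:ℝ))) := by
          rw [Real.rpow_sub hd0]
          ring
  -- pointwise bound for the local part
  set c₂ : ℝ := C₂ * (S ^ gm + S ^ gp) with hc₂def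
  have hc₂0 : 0 ≤ c₂ := by positivity
  have hLoc : ∀ t : ℝ, 0 < t → t ≤ 1 → ∀ x : EuclideanSpace ℝ (Fin N),
      G x x (|t * v₀ x|) ≤ t ^ gm * c₂ := by
    intro t ht ht1 x
    have h1 : |t * v₀ x| = t * |v₀ x| := by rw [abs_mul, abs_of_pos ht]
    rw [h1]
    calc G x x (t * |v₀ x|) ≤ t ^ gm * G x x |v₀ x| := hscale x x |v₀ x| t ht ht1
    _ ≤ t ^ gm * (C₂ * (|v₀ x| ^ gm + |v₀ x| ^ gp)) :=
        mul_le_mul_of_nonneg_left (hGbound x x _ (abs_nonneg _)) (Real.rpow_nonneg ht.le _)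
    _ ≤ t ^ gm * c₂ := by
        apply mul_le_mul_of_nonneg_left _ (Real.rpow_nonneg ht.le _)
        rw [hc₂def]
        have b1 : |v₀ x| ^ gm ≤ S ^ gm :=
          Real.rpow_le_rpow (abs_nonneg _) (hSabs x) hgm0.le
        have b2 : |v₀ x| ^ gp ≤ S ^ gp :=
          Real.rpow_le_rpow (abs_nonneg _) (hSabs x) hgp0.le
        nlinarith
  -- integrable dominating kernel
  have hker : IntegrableOn (fun q : EuclideanSpace ℝ (Fin N) × EuclideanSpace ℝ (Fin N) =>
      dist q.1 q.2 ^ (β - (N:ℝ))) (Ω ×ˢ Ω) :=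
    auxJ_integrableOn_dist N hN Ω hΩmeas hR hD0 hdistD hβ0
  set I₁ : ℝ := ∫ q in Ω ×ˢ Ω, dist q.1 q.2 ^ (β - (N:ℝ)) with hI₁def
  -- upper bound for the modular
  set KK : ℝ := Cg * I₁ + c₂ * (volume Ω).toReal with hKKdef
  have hPsiBound : ∀ t : ℝ, 0 < t → t ≤ 1 →
      PsiFun Ω s G (fun x => t * v₀ x) ≤ t ^ gm * KK := by
    intro t ht ht1
    have hA : (∫ q in Ω ×ˢ Ω, G q.1 q.2
          (((fun x => t * v₀ x) q.1 - (fun x => t * v₀ x) q.2) / dist q.1 q.2 ^ s q.1 q.2) /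
          dist q.1 q.2 ^ (N:ℝ))
        ≤ t ^ gm * (Cg * I₁) := by
      have hg1 : Integrable (fun q : EuclideanSpace ℝ (Fin N) × EuclideanSpace ℝ (Fin N) =>
          t ^ gm * (Cg * dist q.1 q.2 ^ (β - (N:ℝ))))
          ((volume).restrict (Ω ×ˢ Ω)) := by
        exact (hker.const_mul Cg).const_mul (t ^ gm)
      have h2 := integral_mono_of_nonneg
        (f := fun q : EuclideanSpace ℝ (Fin N) × EuclideanSpace ℝ (Fin N) =>
          G q.1 q.2 ((t * v₀ q.1 - t * v₀ q.2) / dist q.1 q.2 ^ s q.1 q.2) /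
            dist q.1 q.2 ^ (N:ℝ))
        (g := fun q : EuclideanSpace ℝ (Fin N) × EuclideanSpace ℝ (Fin N) =>
          t ^ gm * (Cg * dist q.1 q.2 ^ (β - (N:ℝ))))
        (μ := (volume).restrict (Ω ×ˢ Ω))
        (Filter.Eventually.of_forall (fun q =>
          div_nonneg (hGge0 q.1 q.2 _) (Real.rpow_nonneg dist_nonneg _)))
        hg1
        ((ae_restrict_iff' (hΩmeas.prod hΩmeas)).2 (Filter.Eventually.of_forall (fun q hq =>
          hGag t ht ht1 q.1 hq.1 q.2 hq.2)))
      calc (∫ q in Ω ×ˢ Ω, G q.1 q.2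
            (((fun x => t * v₀ x) q.1 - (fun x => t * v₀ x) q.2) / dist q.1 q.2 ^ s q.1 q.2) /
            dist q.1 q.2 ^ (N:ℝ))
          ≤ ∫ q in Ω ×ˢ Ω, t ^ gm * (Cg * dist q.1 q.2 ^ (β - (N:ℝ))) := h2
      _ = t ^ gm * (Cg * I₁) := by
          rw [integral_const_mul]
          congr 1
          rw [integral_const_mul]
    have hB : (∫ x in Ω, G x x |(fun x => t * v₀ x) x|) ≤ t ^ gm * (c₂ * (volume Ω).toReal) := by
      have hg2 : Integrable (fun _ : EuclideanSpace ℝ (Fin N) => t ^ gm * c₂)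
          ((volume).restrict Ω) :=
        integrableOn_const hμΩ.ne
      have h2 := integral_mono_of_nonneg
        (f := fun x => G x x |t * v₀ x|)
        (g := fun _ => t ^ gm * c₂)
        (μ := (volume).restrict Ω)
        (Filter.Eventually.of_forall (fun x => hGge0 x x _))
        hg2
        (Filter.Eventually.of_forall (fun x => hLoc t ht ht1 x))
      calc (∫ x in Ω, G x x |(fun x => t * v₀ x) x|)
          ≤ ∫ _ in Ω, t ^ gm * c₂ := h2
      _ = (volume Ω).toReal • (t ^ gm * c₂) := setIntegral_const _
      _ = t ^ gm * (c₂ * (volume Ω).toReal) := by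
          rw [smul_eq_mul]
          ring
    have hsum := add_le_add hA hB
    calc PsiFun Ω s G (fun x => t * v₀ x)
        ≤ t ^ gm * (Cg * I₁) + t ^ gm * (c₂ * (volume Ω).toReal) := hsum
    _ = t ^ gm * KK := by rw [hKKdef]; ring
  -- the point where `v₀` is positive
  obtain ⟨x₀, hx₀⟩ : ∃ x, v₀ x ≠ 0 := Function.ne_iff.mp hv₀ne
  have hx₀pos : 0 < v₀ x₀ := (hv₀nonneg x₀).lt_of_ne (Ne.symm hx₀)
  have hx₀Ω : x₀ ∈ Ω := hv₀in (subset_tsupport v₀ hx₀)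
  -- minimum of m over the closure
  have hcl : IsCompact (closure Ω) := hΩbd.isCompact_closure
  obtain ⟨xm, hxmcl, hmmin'⟩ := hcl.exists_isMinOn ⟨x₀, subset_closure hx₀Ω⟩
    hmcont.continuousOn
  have hmmin := isMinOn_iff.mp hmmin' 
  set α : ℝ := 1 - m xm with hαdef
  have hα0 : 0 < α := by
    have := (hmrange xm).2
    rw [hαdef]; linarith
  have hα1 : α < 1 := by
    have := (hmrange xm).1
    rw [hαdef]; linarith
  have hαm : ∀ x ∈ Ω, 1 - m x ≤ α := by
    intro x hx
    have := hmmin x (subset_closure hx)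
    rw [hαdef]; linarith
  -- continuity and integrability of the weighted term
  have hcont1 : ∀ t : ℝ, Continuous
      (fun x => h x * |t * v₀ x| ^ (1 - m x) / (1 - m x)) := by
    intro t
    have hbase : Continuous fun x : EuclideanSpace ℝ (Fin N) => |t * v₀ x| :=
      (continuous_const.mul hv₀smooth.continuous).abs
    have hrp : Continuous fun x : EuclideanSpace ℝ (Fin N) => |t * v₀ x| ^ (1 - m x) := by
      rw [continuous_iff_continuousAt]
      intro x
      exact ContinuousAt.rpow hbase.continuousAt
        ((continuous_const.sub hmcont).continuousAt)
        (Or.inr (by linarith [(hmrange x).2]))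
    exact (hhcont.mul hrp).div (continuous_const.sub hmcont)
      (fun x => by have := (hmrange x).2; intro hc; linarith [sub_eq_zero.mp hc])
  have hint1 : ∀ t : ℝ, IntegrableOn
      (fun x => h x * |t * v₀ x| ^ (1 - m x) / (1 - m x)) Ω := by
    intro t
    exact (((hcont1 t).continuousOn).integrableOn_compact hcl).mono_set subset_closure
  set g₀ : EuclideanSpace ℝ (Fin N) → ℝ :=
    fun x => h x * |v₀ x| ^ (1 - m x) / (1 - m x) with hg₀def
  have hg₀eq : g₀ = fun x => h x * |(1:ℝ) * v₀ x| ^ (1 - m x) / (1 - m x) := by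
    funext x
    rw [one_mul]
  have hg₀cont : Continuous g₀ := by rw [hg₀eq]; exact hcont1 1
  have hg₀int : IntegrableOn g₀ Ω := by rw [hg₀eq]; exact hint1 1
  set c : ℝ := ∫ x in Ω, g₀ x with hcdef
  have hc0 : 0 < c := by
    rw [hcdef, setIntegral_pos_iff_support_of_nonneg_ae ?hnn hg₀int]
    · set U : Set (EuclideanSpace ℝ (Fin N)) := Ω ∩ g₀ ⁻¹' Set.Ioi 0 with hUdef
      have hUopen : IsOpen U := hΩopen.inter (isOpen_Ioi.preimage hg₀cont)
      have hg₀x₀ : 0 < g₀ x₀ := by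
        have h1 : 0 < h x₀ := hhpos x₀ hx₀Ω
        have h2 : 0 < |v₀ x₀| ^ (1 - m x₀) :=
          Real.rpow_pos_of_pos (abs_pos.mpr hx₀pos.ne') _
        have h3 : 0 < 1 - m x₀ := by linarith [(hmrange x₀).2]
        rw [hg₀def]
        positivity
      have hx₀U : x₀ ∈ U := ⟨hx₀Ω, hg₀x₀⟩
      have hsub : U ⊆ Function.support g₀ ∩ Ω := fun x hx => ⟨ne_of_gt hx.2, hx.1⟩
      exact lt_of_lt_of_le (hUopen.measure_pos volume ⟨x₀, hx₀U⟩) (measure_mono hsub)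
    · refine (ae_restrict_iff' hΩmeas).2 (Filter.Eventually.of_forall (fun x hx => ?_))
      have h1 := (hhpos x hx).le
      have h3 : 0 < 1 - m x := by linarith [(hmrange x).2]
      rw [hg₀def]
      positivity
  -- lower bound on the weighted integral
  have hlow : ∀ t : ℝ, 0 < t → t ≤ 1 →
      t ^ α * c ≤ ∫ x in Ω, h x * |t * v₀ x| ^ (1 - m x) / (1 - m x) := by
    intro t ht ht1
    have heq : t ^ α * c = ∫ x in Ω, t ^ α * g₀ x := by
      rw [hcdef, integral_const_mul]
    rw [heq]
    apply integral_mono_of_nonneg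
    · refine (ae_restrict_iff' hΩmeas).2 (Filter.Eventually.of_forall (fun x hx => ?_))
      have h1 := (hhpos x hx).le
      have h3 : 0 < 1 - m x := by linarith [(hmrange x).2]
      have h4 : (0:ℝ) ≤ t ^ α := Real.rpow_nonneg ht.le _
      rw [hg₀def]
      positivity
    · exact hint1 t
    · refine (ae_restrict_iff' hΩmeas).2 (Filter.Eventually.of_forall (fun x hx => ?_))
      have h2 : |t * v₀ x| ^ (1 - m x) = t ^ (1 - m x) * |v₀ x| ^ (1 - m x) := by
        rw [abs_mul, abs_of_pos ht, Real.mul_rpow ht.le (abs_nonneg _)]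
      have h3 : t ^ α ≤ t ^ (1 - m x) :=
        Real.rpow_le_rpow_of_exponent_ge ht ht1 (hαm x hx)
      have hh := (hhpos x hx).le
      have hq : (0:ℝ) ≤ |v₀ x| ^ (1 - m x) := Real.rpow_nonneg (abs_nonneg _) _
      have hden : 0 < 1 - m x := by linarith [(hmrange x).2]
      have key : t ^ α * (h x * |v₀ x| ^ (1 - m x)) ≤
          h x * (t ^ (1 - m x) * |v₀ x| ^ (1 - m x)) := by
        calc t ^ α * (h x * |v₀ x| ^ (1 - m x))
            = (h x * |v₀ x| ^ (1 - m x)) * t ^ α := by ring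
        _ ≤ (h x * |v₀ x| ^ (1 - m x)) * t ^ (1 - m x) :=
            mul_le_mul_of_nonneg_left h3 (mul_nonneg hh hq)
        _ = h x * (t ^ (1 - m x) * |v₀ x| ^ (1 - m x)) := by ring
      simp only [hg₀def]
      rw [h2]
      have e2 : t ^ α * (h x * |v₀ x| ^ (1 - m x) / (1 - m x))
          = (t ^ α * (h x * |v₀ x| ^ (1 - m x))) / (1 - m x) := by ring
      rw [e2]
      exact (div_le_div_iff_of_pos_right hden).mpr key
  -- conclusion
  set Kp : ℝ := max KK 0 + 1 with hKpdef
  have hKp0 : 0 < Kp := by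
    rw [hKpdef]
    have := le_max_right KK 0
    linarith
  have hKKle : KK ≤ Kp := by
    rw [hKpdef]
    have := le_max_left KK 0
    linarith
  have hgmα : 0 < gm - α := by linarith
  have hcKp : 0 < c / Kp := div_pos hc0 hKp0
  refine ⟨min 1 ((c / Kp) ^ (gm - α)⁻¹),
    lt_min one_pos (Real.rpow_pos_of_pos hcKp _), ?_⟩
  intro t ht htlt
  have ht1 : t ≤ 1 := le_of_lt (lt_of_lt_of_le htlt (min_le_left _ _))
  have hPsi := hPsiBound t ht ht1
  have hAlow := hlow t ht ht1
  have h1 : PsiFun Ω s G (fun x => t * v₀ x) ≤ t ^ gm * Kp :=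
    le_trans hPsi (mul_le_mul_of_nonneg_left hKKle (Real.rpow_nonneg ht.le _))
  have h2 : t ^ gm * Kp < t ^ α * c := by
    have e1 : t ^ gm = t ^ α * t ^ (gm - α) := by
      rw [← Real.rpow_add ht]
      congr 1
      ring
    rw [e1, mul_assoc]
    apply mul_lt_mul_of_pos_left _ (Real.rpow_pos_of_pos ht α)
    have h4 : t ^ (gm - α) < (min 1 ((c / Kp) ^ (gm - α)⁻¹)) ^ (gm - α) :=
      Real.rpow_lt_rpow ht.le htlt hgmα
    have h5 : (min 1 ((c / Kp) ^ (gm - α)⁻¹)) ^ (gm - α) ≤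
        ((c / Kp) ^ (gm - α)⁻¹) ^ (gm - α) :=
      Real.rpow_le_rpow (le_min zero_le_one (Real.rpow_nonneg hcKp.le _))
        (min_le_right _ _) hgmα.le
    have h6 : ((c / Kp) ^ (gm - α)⁻¹) ^ (gm - α) = c / Kp := by
      rw [← Real.rpow_mul hcKp.le, inv_mul_cancel₀ hgmα.ne', Real.rpow_one]
    have h7 : t ^ (gm - α) < c / Kp := by
      rw [← h6]
      exact lt_of_lt_of_le h4 h5
    rw [lt_div_iff₀ hKp0] at h7
    linarith
  have hJ : JFun Ω s G h m (fun x => t * v₀ x)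
      = PsiFun Ω s G (fun x => t * v₀ x)
        - ∫ x in Ω, h x * |t * v₀ x| ^ (1 - m x) / (1 - m x) := rfl
  rw [hJ]
  linarith
end

section
/- Let Ω ⊂ ℝᴺ be a measurable set, h : Ω → [0,∞) measurable with h > 0 a.e., m : Ω → (0,1) measurable, and u₀ : Ω → [0,∞) measurable with u₀ > 0 a.e. Let φ ≥ 0 be measurable. Then, with F(t) = ∫_Ω h(x)·((u₀+tφ)^{1−m(x)} − u₀^{1−m(x)})/(t(1−m(x))) dx for t > 0, one has liminf_{t→0⁺} F(t) ≥ ∫_Ω h(x) u₀(x)^{−m(x)} φ(x) dx. -/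
/-!
Write `c = 1 - m(x) ∈ (0, 1]`. By concavity of `s ↦ s ^ c`, the difference quotient
`((u₀ + tφ) ^ c - u₀ ^ c) / (t c)` lies between `0` and the derivative `u₀ ^ (c - 1) φ` at `t = 0`,
to which it converges as `t → 0⁺`. Hence the integrand converges pointwise and is dominated by
its limit `h u₀ ^ (-m) φ`. If that limit is integrable, dominated convergence gives equality of
the limit of the integrals; otherwise its integral is `0` by convention, while the integrals
of the nonnegative integrands have nonnegative `liminf`.
-/

open Filter Set MeasureTheory Topology

lemma Real.rpow_add_le_rpow_add_mul_rpow_sub_one {u b c : ℝ} (hu : 0 < u) (hb : 0 ≤ b)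
    (hc₀ : 0 ≤ c) (hc₁ : c ≤ 1) : (u + b) ^ c ≤ u ^ c + c * u ^ (c - 1) * b := by
  have hbu : 0 ≤ b / u := div_nonneg hb hu.le
  calc (u + b) ^ c = u ^ c * (1 + b / u) ^ c := by
        rw [← Real.mul_rpow hu.le (by linarith), mul_add, mul_div_cancel₀ _ hu.ne', mul_one]
    _ ≤ u ^ c * (1 + c * (b / u)) :=
        mul_le_mul_of_nonneg_left (rpow_one_add_le_one_add_mul_self (by linarith) hc₀ hc₁)
          (Real.rpow_nonneg hu.le c)
    _ = u ^ c + c * u ^ (c - 1) * b := by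
        rw [Real.rpow_sub_one hu.ne']
        field_simp

section DifferenceQuotient

variable {u v c t : ℝ}

lemma Real.rpow_diffQuot_nonneg (hu : 0 ≤ u) (hv : 0 ≤ v) (hc : 0 ≤ c) (ht : 0 ≤ t) :
    0 ≤ ((u + t * v) ^ c - u ^ c) / (t * c) := by
  have : u ^ c ≤ (u + t * v) ^ c :=
    Real.rpow_le_rpow hu (le_add_of_nonneg_right (mul_nonneg ht hv)) hc
  exact div_nonneg (sub_nonneg.mpr this) (mul_nonneg ht hc)

lemma Real.rpow_diffQuot_le (hu : 0 < u) (hv : 0 ≤ v) (hc₀ : 0 < c) (hc₁ : c ≤ 1) (ht : 0 < t) :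
    ((u + t * v) ^ c - u ^ c) / (t * c) ≤ u ^ (c - 1) * v := by
  have := Real.rpow_add_le_rpow_add_mul_rpow_sub_one hu (mul_nonneg ht.le hv) hc₀.le hc₁
  rw [div_le_iff₀ (mul_pos ht hc₀)]
  linarith

lemma Real.tendsto_rpow_diffQuot (hu : 0 < u) (hc : c ≠ 0) :
    Tendsto (fun t => ((u + t * v) ^ c - u ^ c) / (t * c)) (𝓝[≠] 0) (𝓝 (u ^ (c - 1) * v)) := by
  have hderiv : HasDerivAt (fun t => (u + t * v) ^ c) (v * c * (u + 0 * v) ^ (c - 1)) 0 :=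
    ((hasDerivAt_mul_const v).const_add u).rpow_const (Or.inl (by simpa using hu.ne'))
  have hlimit : v * c * (u + 0 * v) ^ (c - 1) / c = u ^ (c - 1) * v := by
    rw [zero_mul, add_zero]
    field_simp
  refine hlimit ▸ ((hasDerivAt_iff_tendsto_slope.mp hderiv).div_const c).congr fun t => ?_
  rw [slope_def_field, sub_zero, zero_mul, add_zero, div_div]

end DifferenceQuotient

lemma Real.liminf_nonneg_of_eventually_nonneg {ι : Type*} {l : Filter ι} {f : ι → ℝ}
    (hf : ∀ᶠ i in l, 0 ≤ f i) : 0 ≤ liminf f l := by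
  rw [liminf_eq]
  exact Real.sSup_nonneg' ⟨0, hf, le_rfl⟩

theorem MeasureTheory.integral_le_liminf_integral_of_tendsto_of_le {α ι : Type*}
    [MeasurableSpace α] {μ : Measure α} {l : Filter ι} [l.IsCountablyGenerated] [l.NeBot]
    {F : ι → α → ℝ} {g : α → ℝ} (hF_meas : ∀ᶠ i in l, AEStronglyMeasurable (F i) μ)
    (hF_nonneg : ∀ᶠ i in l, ∀ᵐ x ∂μ, 0 ≤ F i x) (hF_le : ∀ᶠ i in l, ∀ᵐ x ∂μ, F i x ≤ g x)
    (hF_lim : ∀ᵐ x ∂μ, Tendsto (fun i => F i x) l (𝓝 (g x))) :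
    ∫ x, g x ∂μ ≤ liminf (fun i => ∫ x, F i x ∂μ) l := by
  by_cases hg : Integrable g μ
  · have hbound : ∀ᶠ i in l, ∀ᵐ x ∂μ, ‖F i x‖ ≤ g x := by
      filter_upwards [hF_nonneg, hF_le] with i hi_nonneg hi_le
      filter_upwards [hi_nonneg, hi_le] with x hx_nonneg hx_le
      rwa [Real.norm_of_nonneg hx_nonneg]
    rw [(tendsto_integral_filter_of_dominated_convergence g hF_meas hbound hg hF_lim).liminf_eq]
  · rw [integral_undef hg]
    refine Real.liminf_nonneg_of_eventually_nonneg ?_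
    filter_upwards [hF_nonneg] with i hi using integral_nonneg_of_ae hi

theorem stmt_19_general (N : ℕ) (Ω : Set (EuclideanSpace ℝ (Fin N)))
    (hΩmeas : MeasurableSet Ω)
    (h : EuclideanSpace ℝ (Fin N) → ℝ) (hh : Measurable h)
    (hhnonneg : ∀ x, 0 ≤ h x)
    (m : EuclideanSpace ℝ (Fin N) → ℝ) (hm : Measurable m)
    (hmrange : ∀ x ∈ Ω, 0 < m x ∧ m x < 1)
    (u₀ : EuclideanSpace ℝ (Fin N) → ℝ) (hu₀ : Measurable u₀)
    (hu₀nonneg : ∀ x, 0 ≤ u₀ x)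
    (hu₀pos : ∀ᵐ x ∂(volume.restrict Ω), 0 < u₀ x)
    (φ : EuclideanSpace ℝ (Fin N) → ℝ) (hφ : Measurable φ)
    (hφnonneg : ∀ x, 0 ≤ φ x) :
    (∫ x in Ω, h x * u₀ x ^ (-(m x)) * φ x) ≤
      Filter.liminf
        (fun t : ℝ => ∫ x in Ω,
          h x * ((u₀ x + t * φ x) ^ (1 - m x) - u₀ x ^ (1 - m x)) / (t * (1 - m x)))
        (nhdsWithin 0 (Set.Ioi 0)) := by
  have hgood : ∀ᵐ x ∂(volume.restrict Ω), 0 < 1 - m x ∧ 1 - m x ≤ 1 ∧ 0 < u₀ x := by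
    filter_upwards [ae_restrict_mem hΩmeas, hu₀pos] with x hx hux
    obtain ⟨hm₀, hm₁⟩ := hmrange x hx
    exact ⟨by linarith, by linarith, hux⟩
  have hexp : ∀ x, -(m x) = 1 - m x - 1 := fun x => by ring
  simp only [hexp, mul_div_assoc, mul_assoc]
  refine integral_le_liminf_integral_of_tendsto_of_le (Eventually.of_forall fun t => ?_)
    ?_ ?_ ?_
  · fun_prop
  · filter_upwards [self_mem_nhdsWithin] with t ht
    filter_upwards [hgood] with x hx
    obtain ⟨hc₀, -, -⟩ := hx
    exact mul_nonneg (hhnonneg x)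
      (Real.rpow_diffQuot_nonneg (hu₀nonneg x) (hφnonneg x) hc₀.le (le_of_lt ht))
  · filter_upwards [self_mem_nhdsWithin] with t ht
    filter_upwards [hgood] with x hx
    obtain ⟨hc₀, hc₁, hux⟩ := hx
    exact mul_le_mul_of_nonneg_left (Real.rpow_diffQuot_le hux (hφnonneg x) hc₀ hc₁ ht)
      (hhnonneg x)
  · filter_upwards [hgood] with x hx
    obtain ⟨hc₀, -, hux⟩ := hx
    exact ((Real.tendsto_rpow_diffQuot hux hc₀.ne').mono_left
      (nhdsWithin_mono 0 fun t ht => ne_of_gt ht)).const_mul (h x)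

/-- Inequality (3.11): Fatou-type lower bound for the difference quotient of
the singular term as `t → 0⁺`. -/
theorem stmt_19 (N : ℕ) (Ω : Set (EuclideanSpace ℝ (Fin N)))
    (hΩmeas : MeasurableSet Ω)
    (h : EuclideanSpace ℝ (Fin N) → ℝ) (hh : Measurable h)
    (hhnonneg : ∀ x, 0 ≤ h x)
    (hhpos : ∀ᵐ x ∂(volume.restrict Ω), 0 < h x)
    (m : EuclideanSpace ℝ (Fin N) → ℝ) (hm : Measurable m)
    (hmrange : ∀ x ∈ Ω, 0 < m x ∧ m x < 1)
    (u₀ : EuclideanSpace ℝ (Fin N) → ℝ) (hu₀ : Measurable u₀)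
    (hu₀nonneg : ∀ x, 0 ≤ u₀ x)
    (hu₀pos : ∀ᵐ x ∂(volume.restrict Ω), 0 < u₀ x)
    (φ : EuclideanSpace ℝ (Fin N) → ℝ) (hφ : Measurable φ)
    (hφnonneg : ∀ x, 0 ≤ φ x) :
    (∫ x in Ω, h x * u₀ x ^ (-(m x)) * φ x) ≤
      Filter.liminf
        (fun t : ℝ => ∫ x in Ω,
          h x * ((u₀ x + t * φ x) ^ (1 - m x) - u₀ x ^ (1 - m x)) / (t * (1 - m x)))
        (nhdsWithin 0 (Set.Ioi 0)) :=
  stmt_19_general N Ω hΩmeas h hh hhnonneg m hm hmrange u₀ hu₀ hu₀nonneg hu₀pos φ hφ hφnonneg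
end
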